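/- arXiv:cs/0508013 — 4 statements merged into one kernel-verified Lean document; each statement's English description precedes it below -/
import Mathlib

section
/- If v is a zero neighbor in a binary linear code C, then its extension v^(ex) (obtained by appending an overall parity bit) is a zero neighbor in the extended code C_ex. -/
open Finset

/-- Support of a binary vector: the set of nonzero coordinates. -/
def supp {n : ℕ} (v : Fin n → ZMod 2) : Finset (Fin n) :=
  Finset.univ.filter fun i => v i ≠ 0

/-- Hamming weight. -/
def wt {n : ℕ} (v : Fin n → ZMod 2) : ℕ := (supp v).card

/-- A nonzero codeword of `D` is a zero neighbor (minimal codeword) if no nonzero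
codeword of `D` has support strictly contained in its support. -/
def IsZeroNeighbor {n : ℕ} (D : Set (Fin n → ZMod 2)) (v : Fin n → ZMod 2) : Prop :=
  v ∈ D ∧ v ≠ 0 ∧ ∀ v' ∈ D, v' ≠ 0 → ¬ supp v' ⊂ supp v

/-- `v` is decomposable in `D` if it is the sum of two nonzero codewords of `D`
with disjoint supports. -/
def Decomposable {n : ℕ} (D : Set (Fin n → ZMod 2)) (v : Fin n → ZMod 2) : Prop :=
  ∃ v1 v2, v1 ∈ D ∧ v2 ∈ D ∧ v1 ≠ 0 ∧ v2 ≠ 0 ∧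
    Disjoint (supp v1) (supp v2) ∧ v = v1 + v2

/-- Extension of a vector by its overall parity bit. -/
def extVec {n : ℕ} (v : Fin n → ZMod 2) : Fin (n + 1) → ZMod 2 :=
  Fin.snoc v (∑ i, v i)

/-- The extended code. -/
def extCode {n : ℕ} (C : Submodule (ZMod 2) (Fin n → ZMod 2)) :
    Set (Fin (n + 1) → ZMod 2) :=
  extVec '' (C : Set (Fin n → ZMod 2))

/-- An even-weight codeword is only-odd-decomposable if it is decomposable and in every
decomposition into nonzero disjoint-support codewords both parts have odd weight. -/
def OnlyOddDecomposable {n : ℕ} (C : Submodule (ZMod 2) (Fin n → ZMod 2))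
    (v : Fin n → ZMod 2) : Prop :=
  Even (wt v) ∧ Decomposable (C : Set (Fin n → ZMod 2)) v ∧
    ∀ v1 v2, v1 ∈ C → v2 ∈ C → v1 ≠ 0 → v2 ≠ 0 →
      Disjoint (supp v1) (supp v2) → v = v1 + v2 → Odd (wt v1) ∧ Odd (wt v2)

/-- `L_w(D)`: the number of zero neighbors of weight `w` in `D`. -/
noncomputable def Lw {n : ℕ} (D : Set (Fin n → ZMod 2)) (w : ℕ) : ℕ :=
  {v : Fin n → ZMod 2 | IsZeroNeighbor D v ∧ wt v = w}.ncard

/-- `N_w(C)`: the number of only-odd-decomposable codewords of weight `w` in `C`. -/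
noncomputable def Nw {n : ℕ} (C : Submodule (ZMod 2) (Fin n → ZMod 2)) (w : ℕ) : ℕ :=
  {v : Fin n → ZMod 2 | v ∈ C ∧ OnlyOddDecomposable C v ∧ wt v = w}.ncard

/-- Action of a coordinate permutation on a vector. -/
def permVec {n : ℕ} (π : Equiv.Perm (Fin n)) (v : Fin n → ZMod 2) : Fin n → ZMod 2 :=
  v ∘ π.symm

/-- `π` is an automorphism of the code `D`. -/
def IsAut {n : ℕ} (D : Set (Fin n → ZMod 2)) (π : Equiv.Perm (Fin n)) : Prop :=
  permVec π '' D = D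

/-- The even weight subcode of `C`, as a set. -/
def evenSub {n : ℕ} (C : Submodule (ZMod 2) (Fin n → ZMod 2)) :
    Set (Fin n → ZMod 2) :=
  {v : Fin n → ZMod 2 | v ∈ C ∧ Even (wt v)}

@[simp]
theorem extVec_castSucc {n : ℕ} (v : Fin n → ZMod 2) (i : Fin n) :
    extVec v i.castSucc = v i :=
  Fin.snoc_castSucc ..

theorem extVec_injective {n : ℕ} : Function.Injective (extVec (n := n)) :=
  fun u v h => funext fun i => by simpa using congrFun h i.castSucc

@[simp]
theorem extVec_zero {n : ℕ} : extVec (0 : Fin n → ZMod 2) = 0 := by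
  ext i
  refine Fin.lastCases ?_ (fun j => ?_) i <;> simp [extVec]

theorem extVec_ne_zero {n : ℕ} {v : Fin n → ZMod 2} (hv : v ≠ 0) : extVec v ≠ 0 :=
  extVec_zero (n := n) ▸ extVec_injective.ne hv

theorem mem_supp {n : ℕ} {v : Fin n → ZMod 2} {i : Fin n} : i ∈ supp v ↔ v i ≠ 0 := by
  simp [supp]

theorem castSucc_mem_supp_extVec {n : ℕ} {v : Fin n → ZMod 2} {i : Fin n} :
    i.castSucc ∈ supp (extVec v) ↔ i ∈ supp v := by
  simp only [mem_supp, extVec_castSucc]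

theorem supp_injective {n : ℕ} : Function.Injective (supp (n := n)) := by
  intro u v h
  funext i
  have hi : u i ≠ 0 ↔ v i ≠ 0 := by rw [← mem_supp, ← mem_supp, h]
  revert hi
  generalize u i = a
  generalize v i = b
  decide +revert

theorem supp_subset_of_supp_extVec_subset {n : ℕ} {u v : Fin n → ZMod 2}
    (h : supp (extVec u) ⊆ supp (extVec v)) : supp u ⊆ supp v :=
  fun _ hi => castSucc_mem_supp_extVec.mp (h (castSucc_mem_supp_extVec.mpr hi))

theorem supp_ssubset_of_supp_extVec_ssubset {n : ℕ} {u v : Fin n → ZMod 2}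
    (h : supp (extVec u) ⊂ supp (extVec v)) : supp u ⊂ supp v := by
  refine (supp_subset_of_supp_extVec_subset h.subset).ssubset_of_ne fun huv => ?_
  rw [supp_injective huv] at h
  exact h.ne rfl

theorem extend_zero_neighbor {n : ℕ}
    (C : Submodule (ZMod 2) (Fin n → ZMod 2)) (v : Fin n → ZMod 2)
    (hzn : IsZeroNeighbor (C : Set (Fin n → ZMod 2)) v) :
    IsZeroNeighbor (extCode C) (extVec v) := by
  obtain ⟨hv, hv0, hmin⟩ := hzn
  refine ⟨⟨v, hv, rfl⟩, extVec_ne_zero hv0, ?_⟩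
  rintro _ ⟨u, hu, rfl⟩ hext0 hss
  have hu0 : u ≠ 0 := by
    rintro rfl
    exact hext0 extVec_zero
  exact hmin u hu hu0 (supp_ssubset_of_supp_extVec_ssubset hss)
end

section
/- If v is a codeword of odd Hamming weight in a binary linear code C and v is not a zero neighbor in C (i.e., v is decomposable), then v^(ex) is not a zero neighbor in the extended code C_ex. -/
open Finset

lemma sum_eq_wt {n : ℕ} (v : Fin n → ZMod 2) : (∑ i, v i) = (wt v : ZMod 2) := by
  have h1 : ∀ x : ZMod 2, x ≠ 0 → x = 1 := by decide
  rw [wt, supp]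
  rw [← Finset.sum_filter_ne_zero]
  rw [Finset.sum_congr rfl (fun i hi => h1 _ (Finset.mem_filter.mp hi).2)]
  simp

lemma supp_add_subset {n : ℕ} (v1 v2 : Fin n → ZMod 2)
    (hd : Disjoint (supp v1) (supp v2)) : supp v1 ⊆ supp (v1 + v2) := by
  intro i hi
  have h2 : v2 i = 0 := by
    by_contra h
    exact (Finset.disjoint_left.mp hd hi) (by simp [supp, h])
  simp only [supp, Finset.mem_filter, Finset.mem_univ, true_and] at hi ⊢
  simpa [Pi.add_apply, h2] using hi

theorem odd_decomposable_extend_not_zero_neighbor {n : ℕ}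
    (C : Submodule (ZMod 2) (Fin n → ZMod 2)) (v : Fin n → ZMod 2)
    (hv : v ∈ C) (hodd : Odd (wt v))
    (hdec : Decomposable (C : Set (Fin n → ZMod 2)) v) :
    ¬ IsZeroNeighbor (extCode C) (extVec v) := by
  obtain ⟨v1, v2, hv1, hv2, h1ne, h2ne, hd, hsum⟩ := hdec
  rintro ⟨-, -, hmin⟩
  have hvsum : (∑ i, v i) = 1 := by
    rw [sum_eq_wt]
    obtain ⟨k, hk⟩ := hodd
    rw [hk]; push_cast; ring_nf
    simp [show ((2 : ZMod 2)) = 0 from rfl]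
  apply hmin (extVec v1) ⟨v1, hv1, rfl⟩
  · intro h
    obtain ⟨i, hi⟩ := Function.ne_iff.mp h1ne
    have : extVec v1 (Fin.castSucc i) = 0 := by rw [h]; rfl
    rw [extVec, Fin.snoc_castSucc] at this
    exact hi this
  · constructor
    · intro i hi
      simp only [supp, Finset.mem_filter, Finset.mem_univ, true_and] at hi ⊢
      induction i using Fin.lastCases with
      | last =>
        rw [extVec, Fin.snoc_last, hvsum]
        exact one_ne_zero
      | cast i =>
        rw [extVec, Fin.snoc_castSucc] at hi ⊢
        have h2 : v2 i = 0 := by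
          by_contra h
          have : i ∈ supp v1 := by simp [supp, hi]
          exact (Finset.disjoint_left.mp hd this) (by simp [supp, h])
        rw [hsum]
        simpa [Pi.add_apply, h2] using hi
    · intro hss
      obtain ⟨j, hj0⟩ := Function.ne_iff.mp h2ne
      have hj : v2 j ≠ 0 := hj0
      have h1 : v1 j = 0 := by
        by_contra h
        exact (Finset.disjoint_left.mp hd (show j ∈ supp v1 by simp [supp, h]))
          (show j ∈ supp v2 by simp [supp, hj])
      have hmem : Fin.castSucc j ∈ supp (extVec v) := by
        simp only [supp, Finset.mem_filter, Finset.mem_univ, true_and]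
        rw [extVec, Fin.snoc_castSucc, hsum]
        simpa [Pi.add_apply, h1] using hj
      have := hss hmem
      simp only [supp, Finset.mem_filter, Finset.mem_univ, true_and] at this
      rw [extVec, Fin.snoc_castSucc] at this
      exact this h1
end

section
/- Let v be an even-weight codeword of a binary linear code C that is decomposable in C. Then v^(ex) is a zero neighbor in the extended code C_ex if and only if every decomposition v = v1 + v2 into nonzero disjoint-support codewords of C has both v1 and v2 of odd weight. -/
open Finset

/-!
The parity bit of `v^(ex)` records the parity of `wt v`, so for even-weight `v` a codeword
`w^(ex)` of `C_ex` has support strictly inside that of `v^(ex)` exactly when `w` has even weight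
and `supp w ⊂ supp v`. Thus `v^(ex)` is a zero neighbor iff every nonzero `w ∈ C` with
`supp w ⊂ supp v` has odd weight. Such `w` are exactly the parts `v1` of the decompositions
`v = v1 + v2` (with `v2 = v + w`), which gives the theorem.
-/

namespace BinaryCode

variable {n : ℕ}

lemma mem_supp {v : Fin n → ZMod 2} {i : Fin n} : i ∈ supp v ↔ v i ≠ 0 := by
  simp [supp]

lemma supp_nonempty_iff {v : Fin n → ZMod 2} : (supp v).Nonempty ↔ v ≠ 0 := by
  simp [supp, Finset.filter_nonempty_iff, Function.ne_iff]

lemma supp_add_of_disjoint {v w : Fin n → ZMod 2} (h : Disjoint (supp v) (supp w)) :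
    supp (v + w) = supp v ∪ supp w := by
  ext i
  have hvw : v i = 0 ∨ w i = 0 := by
    by_contra! hne
    exact Finset.disjoint_left.mp h (mem_supp.mpr hne.1) (mem_supp.mpr hne.2)
  rcases hvw with hv | hw
  · simp [mem_supp, hv]
  · simp [mem_supp, hw]

lemma supp_add_of_subset {v w : Fin n → ZMod 2} (h : supp w ⊆ supp v) :
    supp (v + w) = supp v \ supp w := by
  ext i
  have hwv : w i ≠ 0 → v i ≠ 0 := fun hw => mem_supp.mp (h (mem_supp.mpr hw))
  simp only [mem_supp, Finset.mem_sdiff, Pi.add_apply]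
  generalize v i = a, w i = b at hwv
  decide +revert

lemma supp_ssubset_supp_add {v w : Fin n → ZMod 2} (h : Disjoint (supp v) (supp w))
    (hw : w ≠ 0) : supp v ⊂ supp (v + w) := by
  rw [supp_add_of_disjoint h]
  obtain ⟨i, hi⟩ := supp_nonempty_iff.mpr hw
  exact Finset.ssubset_iff.mpr ⟨i, Finset.disjoint_right.mp h hi, Finset.insert_subset
    (Finset.mem_union_right _ hi) Finset.subset_union_left⟩

lemma sum_eq_wt (v : Fin n → ZMod 2) : ∑ i, v i = (wt v : ZMod 2) := by
  have hv : ∀ i, v i = if v i ≠ 0 then 1 else 0 := fun i => by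
    generalize v i = a
    decide +revert
  rw [Finset.sum_congr rfl fun i _ => hv i, Finset.sum_boole]
  rfl

lemma extVec_castSucc (v : Fin n → ZMod 2) (i : Fin n) : extVec v i.castSucc = v i :=
  Fin.snoc_castSucc ..

lemma extVec_last (v : Fin n → ZMod 2) : extVec v (Fin.last n) = (wt v : ZMod 2) := by
  rw [extVec, Fin.snoc_last, sum_eq_wt]

lemma extVec_injective : Function.Injective (extVec (n := n)) := fun v w h => by
  simpa [extVec, Fin.init_snoc] using congrArg Fin.init h

lemma extVec_zero : extVec (0 : Fin n → ZMod 2) = 0 := by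
  ext i
  induction i using Fin.lastCases with
  | last => simp [extVec_last, wt, supp]
  | cast i => simp [extVec_castSucc]

lemma extVec_eq_zero_iff {v : Fin n → ZMod 2} : extVec v = 0 ↔ v = 0 :=
  extVec_injective.eq_iff' extVec_zero

lemma castSucc_mem_supp_extVec {v : Fin n → ZMod 2} {i : Fin n} :
    i.castSucc ∈ supp (extVec v) ↔ i ∈ supp v := by
  rw [mem_supp, mem_supp, extVec_castSucc]

lemma last_mem_supp_extVec {v : Fin n → ZMod 2} :
    Fin.last n ∈ supp (extVec v) ↔ Odd (wt v) := by
  rw [mem_supp, extVec_last, Ne, ZMod.natCast_eq_zero_iff_even, Nat.not_even_iff_odd]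

lemma supp_extVec_subset_iff {v w : Fin n → ZMod 2} :
    supp (extVec w) ⊆ supp (extVec v) ↔ supp w ⊆ supp v ∧ (Odd (wt w) → Odd (wt v)) := by
  rw [Finset.subset_iff, Fin.forall_fin_succ', Finset.subset_iff]
  simp only [castSucc_mem_supp_extVec, last_mem_supp_extVec]

lemma supp_extVec_ssubset_iff_of_even {v w : Fin n → ZMod 2} (hv : Even (wt v)) :
    supp (extVec w) ⊂ supp (extVec v) ↔ Even (wt w) ∧ supp w ⊂ supp v := by
  have hv' : ¬Odd (wt v) := Nat.not_odd_iff_even.mpr hv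
  simp only [Finset.ssubset_def, supp_extVec_subset_iff, hv', imp_false,
    Nat.not_odd_iff_even]
  tauto

theorem isZeroNeighbor_extCode_iff_of_even {C : Submodule (ZMod 2) (Fin n → ZMod 2)}
    {v : Fin n → ZMod 2} (hv : v ∈ C) (hv0 : v ≠ 0) (heven : Even (wt v)) :
    IsZeroNeighbor (extCode C) (extVec v) ↔
      ∀ w ∈ C, w ≠ 0 → supp w ⊂ supp v → Odd (wt w) := by
  simp only [IsZeroNeighbor, extCode, extVec_injective.mem_set_image, Set.forall_mem_image,
    SetLike.mem_coe, Ne, extVec_eq_zero_iff, supp_extVec_ssubset_iff_of_even heven,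
    ← Nat.not_odd_iff_even]
  simp only [hv, hv0, not_false_eq_true, true_and]
  exact forall₂_congr fun w _ => by tauto

end BinaryCode

open BinaryCode in
theorem even_decomposable_extend_zero_neighbor_iff {n : ℕ}
    (C : Submodule (ZMod 2) (Fin n → ZMod 2)) (v : Fin n → ZMod 2)
    (hv : v ∈ C) (heven : Even (wt v))
    (hdec : Decomposable (C : Set (Fin n → ZMod 2)) v) :
    IsZeroNeighbor (extCode C) (extVec v) ↔
      (∀ v1 v2, v1 ∈ C → v2 ∈ C → v1 ≠ 0 → v2 ≠ 0 →
        Disjoint (supp v1) (supp v2) → v = v1 + v2 →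
          Odd (wt v1) ∧ Odd (wt v2)) := by
  have hv0 : v ≠ 0 := by
    obtain ⟨v1, v2, -, -, hv1, hv2, hdisj, rfl⟩ := hdec
    exact supp_nonempty_iff.mp
      ((supp_nonempty_iff.mpr hv1).mono (supp_ssubset_supp_add hdisj hv2).subset)
  rw [isZeroNeighbor_extCode_iff_of_even hv hv0 heven]
  constructor
  · rintro hodd v1 v2 hv1 hv2 hv10 hv20 hdisj rfl
    refine ⟨hodd v1 hv1 hv10 (supp_ssubset_supp_add hdisj hv20), hodd v2 hv2 hv20 ?_⟩
    rw [add_comm]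
    exact supp_ssubset_supp_add hdisj.symm hv10
  · intro hodd w hw hw0 hwv
    have hrest : supp (v + w) = supp v \ supp w := supp_add_of_subset hwv.subset
    have hrest0 : v + w ≠ 0 := by
      rw [← supp_nonempty_iff, hrest]
      exact Finset.sdiff_nonempty.mpr hwv.not_subset
    refine (hodd w (v + w) hw (C.add_mem hv hw) hw0 hrest0 ?_ ?_).1
    · rw [hrest]
      exact Finset.disjoint_sdiff
    · rw [add_left_comm, ZModModule.add_self, add_zero]
end

section
/- In a binary linear (n,k) code C, every zero neighbor has Hamming weight at most n - k + 1; hence L_w(C) = 0 for w > n - k + 1. -/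
open Finset

theorem zero_neighbor_weight_le {n k : ℕ}
    (C : Submodule (ZMod 2) (Fin n → ZMod 2))
    (hk : Module.finrank (ZMod 2) C = k) :
    (∀ v, IsZeroNeighbor (C : Set (Fin n → ZMod 2)) v → wt v ≤ n - k + 1) ∧
      ∀ w, w > n - k + 1 → Lw (C : Set (Fin n → ZMod 2)) w = 0 := by
  have H : ∀ v, IsZeroNeighbor (C : Set (Fin n → ZMod 2)) v → wt v ≤ n - k + 1 := by
    intro v hv
    obtain ⟨hvC, hv0, hmin⟩ := hv
    have hone : ∀ a : ZMod 2, a ≠ 0 → a = 1 := by decide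
    have hmem : ∀ (u : Fin n → ZMod 2) i, i ∈ supp u ↔ u i ≠ 0 := by
      intro u i; simp [supp]
    have key : ∀ u : Fin n → ZMod 2, u ∈ C → supp u ⊆ supp v → u = 0 ∨ u = v := by
      intro u huC hsub
      by_cases h0 : u = 0
      · exact Or.inl h0
      · right
        have hle : supp u ≤ supp v := hsub
        have heq : supp u = supp v := hle.lt_or_eq.resolve_left (hmin u huC h0)
        funext i
        by_cases hi : i ∈ supp v
        · have h1 : u i ≠ 0 := (hmem u i).mp (heq ▸ hi)
          have h2 : v i ≠ 0 := (hmem v i).mp hi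
          rw [hone _ h1, hone _ h2]
        · have h1 : ¬ u i ≠ 0 := fun h => hi (heq ▸ (hmem u i).mpr h)
          have h2 : ¬ v i ≠ 0 := fun h => hi ((hmem v i).mpr h)
          rw [not_not.mp h1, not_not.mp h2]
    let φ : C →ₗ[ZMod 2] ({i : Fin n // i ∉ supp v} → ZMod 2) :=
      { toFun := fun u i => u.1 i.1
        map_add' := fun a b => rfl
        map_smul' := fun c a => rfl }
    have hker : LinearMap.ker φ ≤ Submodule.span (ZMod 2) {(⟨v, hvC⟩ : C)} := by
      intro u hu
      have hsub : supp u.1 ⊆ supp v := by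
        intro i hi
        by_contra hiv
        have : φ u ⟨i, hiv⟩ = 0 := by rw [LinearMap.mem_ker.mp hu]; rfl
        exact (hmem u.1 i).mp hi this
      rcases key u.1 u.2 hsub with h | h
      · have : u = 0 := Subtype.ext h
        rw [this]; exact Submodule.zero_mem _
      · have : u = (⟨v, hvC⟩ : C) := Subtype.ext h
        rw [this]; exact Submodule.mem_span_singleton_self _
    have hkerfr : Module.finrank (ZMod 2) (LinearMap.ker φ) ≤ 1 := by
      calc Module.finrank (ZMod 2) (LinearMap.ker φ)
          ≤ Module.finrank (ZMod 2) (Submodule.span (ZMod 2) {(⟨v, hvC⟩ : C)}) :=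
            Submodule.finrank_mono hker
        _ = 1 := finrank_span_singleton (by
              intro h; exact hv0 (congrArg Subtype.val h))
    have hrange : Module.finrank (ZMod 2) (LinearMap.range φ) ≤ n - wt v := by
      have := Submodule.finrank_le (LinearMap.range φ)
      simp only [Module.finrank_fintype_fun_eq_card, Fintype.card_subtype_compl,
        Fintype.card_fin, Fintype.card_coe] at this
      simpa [wt] using this
    have hrn := LinearMap.finrank_range_add_finrank_ker φ
    have hwn : wt v ≤ n := by
      have := Finset.card_le_univ (supp v)
      simpa [wt] using this
    rw [hk] at hrn
    omega
  refine ⟨H, fun w hw => ?_⟩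
  have : {v : Fin n → ZMod 2 | IsZeroNeighbor (C : Set (Fin n → ZMod 2)) v ∧ wt v = w} = ∅ := by
    ext v
    simp only [Set.mem_setOf_eq, Set.mem_empty_iff_false, iff_false, not_and]
    intro hzn hwt
    have := H v hzn
    omega
  rw [Lw, this, Set.ncard_empty]
end
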